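/- Let M : ℕ × ℕ → ℝ be a symmetric positive semidefinite kernel with finite trace, let P_n denote the projection onto the first n coordinates, and let v ∈ ℓ2 with P_n v = 0. Then ‖Mv‖_2 ≤ sqrt(Σ_{h>n} M(h,h)) · sqrt(Σ_h M(h,h)) · ‖v‖_2. -/

import Mathlib

/-!
For a positive semidefinite kernel the 2×2 principal minors give
`|M i j| ≤ √(M i i) √(M j j)`. Hence `|(M v) i| ≤ √(M i i) · S` with
`S = ∑ j, √(M j j) |v j|`, and summing squares gives `‖M v‖² ≤ tr M · S²`.
Since `v` vanishes below `n`, `S` only involves the tail `j ≥ n`, and Cauchy–Schwarz bounds it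
by `√(tr_n M) · ‖v‖`.
-/

/-- A kernel on ℕ is positive semidefinite if every finite principal
submatrix is (symmetric) positive semidefinite. -/
def KernelPSD (K : ℕ → ℕ → ℝ) : Prop :=
  ∀ (m : ℕ) (p : Fin m → ℕ),
    (Matrix.of fun a b : Fin m => K (p a) (p b)).PosSemidef

/-- BIBO stability of a kernel: the induced operator u ↦ (i ↦ Σ_j K i j * u j)
is a bounded operator from ℓ∞ to ℓ1 (sup over the ℓ∞ unit ball is finite). -/
def KernelStable (K : ℕ → ℕ → ℝ) : Prop :=
  ∃ C : ℝ, ∀ u : ℕ → ℝ, (∀ j, |u j| ≤ 1) →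
    (∀ i, Summable fun j => K i j * u j) ∧
    Summable (fun i => |∑' j, K i j * u j|) ∧
    (∑' i, |∑' j, K i j * u j|) ≤ C

namespace KernelPSD

variable {M : ℕ → ℕ → ℝ}

lemma diag_nonneg (hM : KernelPSD M) (i : ℕ) : 0 ≤ M i i := by
  simpa using (hM 1 ![i]).diag_nonneg (i := 0)

lemma symm (hM : KernelPSD M) (i j : ℕ) : M i j = M j i := by
  simpa using congrFun₂ (hM 2 ![i, j]).isHermitian.eq 1 0

lemma sq_le_mul_diag (hM : KernelPSD M) (i j : ℕ) : M i j ^ 2 ≤ M i i * M j j := by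
  have h := (hM 2 ![i, j]).det_nonneg
  simp only [Matrix.det_fin_two, Matrix.of_apply, Matrix.cons_val_zero, Matrix.cons_val_one,
    Matrix.cons_val_fin_one, hM.symm j i, sub_nonneg] at h
  simpa only [sq] using h

lemma abs_le_sqrt_mul_sqrt (hM : KernelPSD M) (i j : ℕ) : |M i j| ≤ √(M i i) * √(M j j) := by
  rw [← Real.sqrt_sq_eq_abs, ← Real.sqrt_mul (hM.diag_nonneg i)]
  exact Real.sqrt_le_sqrt (hM.sq_le_mul_diag i j)

end KernelPSD

section CauchySchwarz

variable {ι : Type*} {f g : ι → ℝ}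

lemma summable_and_tsum_sqrt_mul_sqrt_le (hf : ∀ i, 0 ≤ f i) (hg : ∀ i, 0 ≤ g i)
    (hfs : Summable f) (hgs : Summable g) :
    (Summable fun i => √(f i) * √(g i)) ∧
      ∑' i, √(f i) * √(g i) ≤ √(∑' i, f i) * √(∑' i, g i) := by
  have key := Real.summable_and_inner_le_Lp_mul_Lq_tsum_of_nonneg .two_two
    (f := fun i => √(f i)) (g := fun i => √(g i)) (fun _ => Real.sqrt_nonneg _)
    (fun _ => Real.sqrt_nonneg _) (by simpa only [Real.rpow_two, Real.sq_sqrt (hf _)] using hfs)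
    (by simpa only [Real.rpow_two, Real.sq_sqrt (hg _)] using hgs)
  simpa only [Real.rpow_two, Real.sq_sqrt (hf _), Real.sq_sqrt (hg _), ← Real.sqrt_eq_rpow]
    using key

end CauchySchwarz

lemma tsum_eq_tsum_nat_add_of_forall_lt_eq_zero {α : Type*} [AddCommMonoid α]
    [TopologicalSpace α] {f : ℕ → α} {n : ℕ} (hf : ∀ i < n, f i = 0) :
    ∑' i, f i = ∑' h, f (n + h) := by
  refine Eq.symm <| (add_right_injective n).tsum_eq fun i hi => ?_
  have : n ≤ i := not_lt.mp fun hlt => hi (hf i hlt)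
  exact ⟨i - n, Nat.add_sub_cancel' this⟩

section SchurBound

variable {ι : Type*} {K : ι → ι → ℝ} {d v : ι → ℝ}

lemma abs_tsum_mul_le_of_abs_le_mul (hK : ∀ i j, |K i j| ≤ d i * d j)
    (hs : Summable fun j => d j * |v j|) (i : ι) :
    |∑' j, K i j * v j| ≤ d i * ∑' j, d j * |v j| := by
  have hle : ∀ j, |K i j * v j| ≤ d i * (d j * |v j|) := fun j => by
    rw [abs_mul, ← mul_assoc]
    exact mul_le_mul_of_nonneg_right (hK i j) (abs_nonneg _)
  have habs : Summable fun j => |K i j * v j| :=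
    .of_nonneg_of_le (fun _ => abs_nonneg _) hle (hs.mul_left _)
  calc |∑' j, K i j * v j| ≤ ∑' j, |K i j * v j| := by
        simpa only [Real.norm_eq_abs] using
          norm_tsum_le_tsum_norm (f := fun j => K i j * v j) habs
    _ ≤ ∑' j, d i * (d j * |v j|) := habs.tsum_le_tsum hle (hs.mul_left _)
    _ = d i * ∑' j, d j * |v j| := tsum_mul_left

lemma tsum_sq_tsum_mul_le_of_abs_le_mul (hK : ∀ i j, |K i j| ≤ d i * d j)
    (hs : Summable fun j => d j * |v j|) (hd : Summable fun i => d i ^ 2) :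
    ∑' i, (∑' j, K i j * v j) ^ 2 ≤ (∑' i, d i ^ 2) * (∑' j, d j * |v j|) ^ 2 := by
  have hle : ∀ i, (∑' j, K i j * v j) ^ 2 ≤ d i ^ 2 * (∑' j, d j * |v j|) ^ 2 := fun i => by
    rw [← mul_pow, ← sq_abs]
    exact pow_le_pow_left₀ (abs_nonneg _) (abs_tsum_mul_le_of_abs_le_mul hK hs i) 2
  rw [← tsum_mul_right]
  exact (Summable.of_nonneg_of_le (fun _ => sq_nonneg _) hle (hd.mul_right _)).tsum_le_tsum hle
    (hd.mul_right _)

end SchurBound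

theorem stmt12_general (M : ℕ → ℕ → ℝ)
    (hM : KernelPSD M) (htr : Summable fun i => M i i)
    (n : ℕ) (v : ℕ → ℝ) (hv : Summable fun i => (v i) ^ 2)
    (hsupp : ∀ i < n, v i = 0) :
    Real.sqrt (∑' i, (∑' j, M i j * v j) ^ 2) ≤
      Real.sqrt (∑' h : ℕ, M (n + h) (n + h)) *
        Real.sqrt (∑' h, M h h) * Real.sqrt (∑' i, (v i) ^ 2) := by
  have hd := hM.diag_nonneg
  have habs : ∀ j, |v j| = √(v j ^ 2) := fun j => (Real.sqrt_sq_eq_abs _).symm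
  set S := ∑' j, √(M j j) * |v j| with hS
  have hS_summable : Summable fun j => √(M j j) * |v j| := by
    simpa only [habs] using (summable_and_tsum_sqrt_mul_sqrt_le hd (fun j => sq_nonneg _) htr hv).1
  have hS_tail : S ≤ √(∑' h, M (n + h) (n + h)) * √(∑' i, v i ^ 2) := by
    rw [hS, tsum_eq_tsum_nat_add_of_forall_lt_eq_zero fun i hi => by simp [hsupp i hi],
      tsum_eq_tsum_nat_add_of_forall_lt_eq_zero (f := fun i => v i ^ 2)
        fun i hi => by simp [hsupp i hi]]
    simpa only [habs] using (summable_and_tsum_sqrt_mul_sqrt_le (fun _ => hd _)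
      (fun _ => sq_nonneg _) (htr.comp_injective (add_right_injective n))
      (hv.comp_injective (add_right_injective n))).2
  have hMv : ∑' i, (∑' j, M i j * v j) ^ 2 ≤ (∑' i, M i i) * S ^ 2 := by
    simpa only [Real.sq_sqrt (hd _)] using tsum_sq_tsum_mul_le_of_abs_le_mul
      hM.abs_le_sqrt_mul_sqrt hS_summable (by simpa only [Real.sq_sqrt (hd _)] using htr)
  have hS_nonneg : 0 ≤ S := tsum_nonneg fun j => by positivity
  calc √(∑' i, (∑' j, M i j * v j) ^ 2) ≤ √((∑' i, M i i) * S ^ 2) := Real.sqrt_le_sqrt hMv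
    _ = √(∑' i, M i i) * S := by rw [Real.sqrt_mul (tsum_nonneg hd), Real.sqrt_sq hS_nonneg]
    _ ≤ √(∑' i, M i i) * (√(∑' h, M (n + h) (n + h)) * √(∑' i, v i ^ 2)) := by gcongr
    _ = _ := by ring

/-- For a finite-trace symmetric PSD kernel M and v ∈ ℓ2
supported on indices ≥ n (i.e. P_n v = 0),
‖Mv‖₂ ≤ sqrt(tr_n(M)) · sqrt(tr(M)) · ‖v‖₂, where tr_n is the tail trace. -/
theorem stmt12 (M : ℕ → ℕ → ℝ) (hsym : ∀ i j, M i j = M j i)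
    (hM : KernelPSD M) (htr : Summable fun i => M i i)
    (n : ℕ) (v : ℕ → ℝ) (hv : Summable fun i => (v i) ^ 2)
    (hsupp : ∀ i < n, v i = 0) :
    Real.sqrt (∑' i, (∑' j, M i j * v j) ^ 2) ≤
      Real.sqrt (∑' h : ℕ, M (n + h) (n + h)) *
        Real.sqrt (∑' h, M h h) * Real.sqrt (∑' i, (v i) ^ 2) :=
  stmt12_general M hM htr n v hv hsupp
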